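/- Let Υ be (the topological realization of) a finite tree, let p be a vertex of valence 1 on the boundary of Υ, let e be the unique edge connecting p to a vertex q of Υ, and let Υ' denote the closure of Υ minus the closed edge e (so Υ' contains q but neither e nor p). For 1 ≤ n ≤ N set Σ_n := {x ∈ C^N(Υ) : x_n = p} and Σ'_n := {x ∈ C^N(Υ') : x_n = q}. Then C^N(Υ) is homeomorphic to the space obtained from C^N(Υ') by gluing, for each n = 1,…,N, the space (Σ_n × (0,1]) ∪ (Σ'_n × {0}) to C^N(Υ') along Σ'_n × {0} (identifying Σ'_n × {0} with Σ'_n ⊂ C^N(Υ')). -/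

import Mathlib

/-- The ordered configuration space of `N` distinct labeled points in `X`,
topologized as a subspace of the product `X^N`:
`C^N(X) = {(x₁,…,x_N) ∈ X^N : x_i ≠ x_j for i ≠ j}`. -/
abbrev Config (N : ℕ) (X : Type) [TopologicalSpace X] : Type :=
  {f : Fin N → X // Function.Injective f}

namespace SimpleGraph

variable {V : Type} [Fintype V] [DecidableEq V]

/-- The topological realization of a finite simple graph: the subspace of `V → ℝ`
of convex combinations supported on a single vertex or on the two endpoints of an
edge (vertices are realized as the standard basis points, edges as the segments
joining the basis points of their endpoints). -/
abbrev Realization (G : SimpleGraph V) : Type :=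
  {f : V → ℝ // (∀ v, 0 ≤ f v) ∧ (∑ v, f v) = 1 ∧
    ∃ u w, (u = w ∨ G.Adj u w) ∧ ∀ x, f x ≠ 0 → x = u ∨ x = w}

/-- The point of the topological realization corresponding to a vertex. -/
def vertexPoint (G : SimpleGraph V) (v : V) : G.Realization :=
  ⟨fun w => if w = v then (1 : ℝ) else 0,
    fun w => by dsimp only; split <;> norm_num,
    by simp,
    v, v, Or.inl rfl,
    fun x hx => Or.inl (by by_contra h; simp [h] at hx)⟩

end SimpleGraph

section Decomposition

variable {V : Type} [Fintype V] [DecidableEq V] (G : SimpleGraph V) (p q : V) (N : ℕ)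

/-- The subtree `Υ'`: the closure of `Υ` minus the closed edge at the boundary vertex
`p`, realized as the subspace of points of the realization not supported on `p`. -/
abbrev SubtreeOff : Type := {x : G.Realization // x.val p = 0}

/-- `Σ_n`: configurations on `Υ` whose `n`-th point is at the vertex `p`. -/
abbrev SigmaEnd (n : Fin N) : Type :=
  {x : Config N G.Realization // x.val n = G.vertexPoint p}

/-- The piece `(Σ_n × (0,1]) ∪ (Σ'_n × {0})`, as a subspace of `Σ_n × [0,1]`: at height
`0` only the configurations lying in the natural copy of `Σ'_n` inside `Σ_n` are kept,
i.e. those whose points other than the `n`-th lie in `Υ'` and avoid the vertex `q`. -/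
abbrev GluePiece (n : Fin N) : Type :=
  {z : SigmaEnd G p N n × unitInterval //
    z.2 ≠ 0 ∨ ∀ m, m ≠ n → ((z.1.val.val m).val p = 0 ∧ z.1.val.val m ≠ G.vertexPoint q)}

/-- The gluing relation: a point of `Σ'_n × {0}` in the `n`-th piece is identified with
the corresponding configuration in `C^N(Υ')`, namely the one agreeing with it away from
`n` and having its `n`-th point at `q`. -/
def glueRel (a b : Config N (SubtreeOff G p) ⊕ (Σ n : Fin N, GluePiece G p q N n)) :
    Prop :=
  ∃ (n : Fin N) (z : GluePiece G p q N n) (y : Config N (SubtreeOff G p)),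
    z.val.2 = 0 ∧ ((y.val n).val = G.vertexPoint q) ∧
    (∀ m, m ≠ n → (y.val m).val = z.val.1.val.val m) ∧
    a = Sum.inl y ∧ b = Sum.inr ⟨n, z⟩

end Decomposition

/-!
The height of a point `x` of `Υ` is its `p`-coordinate `x p`. Compressing the edge
`e = [q, p]` towards `q` by a factor `t ∈ [0, 1]` (the homothety of ratio `t` centred at `q` on
`e`, the identity on `Υ'`) sends a configuration of `Σ_n` to one whose `n`-th point lies on `e`
at height `t` and is the highest point of the configuration. Together with the inclusion
`C^N(Υ') ⊆ C^N(Υ)` this gives a continuous surjection from `C^N(Υ') ⊔ ⊔ₙ (pieces)` onto `C^N(Υ)`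
whose fibres are exactly the gluing classes. The `n`-th piece is mapped homeomorphically onto the
closed set of configurations whose `n`-th point is the highest one and lies on `e`: the inverse
rescales by `1 / t`, and it is continuous also at `t = 0` because there the other points lie in
`Υ' \ {q}`, which is open in `Υ` and fixed by the compression. Hence the surjection is closed and
descends to a homeomorphism from the glued space.
-/

open Filter Topology Function

theorem Function.Injective.update_of_forall_ne {α β : Type*} [DecidableEq α] {f : α → β}
    (hf : Injective f) (a : α) {b : β} (hb : ∀ a' ≠ a, f a' ≠ b) : Injective (update f a b) := by
  intro x y hxy
  by_cases hx : x = a <;> by_cases hy : y = a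
  · rw [hx, hy]
  · subst hx
    rw [update_self, update_of_ne hy] at hxy
    exact absurd hxy.symm (hb y hy)
  · subst hy
    rw [update_self, update_of_ne hx] at hxy
    exact absurd hxy (hb x hx)
  · rw [update_of_ne hx, update_of_ne hy] at hxy
    exact hf hxy

section GeneralTopology

variable {X Y : Type*} [TopologicalSpace X] [TopologicalSpace Y]

theorem isClosedMap_sigma_of_finite {ι : Type*} [Finite ι] {σ : ι → Type*}
    [∀ i, TopologicalSpace (σ i)] {f : Sigma σ → Y} (hf : ∀ i, IsClosedMap fun a => f ⟨i, a⟩) :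
    IsClosedMap f := by
  intro s hs
  have himage : f '' s = ⋃ i, (fun a => f ⟨i, a⟩) '' (Sigma.mk i ⁻¹' s) := by
    ext y; simp [Sigma.exists]
  rw [himage]
  exact isClosed_iUnion_of_finite fun i => hf i _ (hs.preimage continuous_sigmaMk)

noncomputable def IsClosedMap.quotHomeomorph {r : X → X → Prop} {f : X → Y}
    (hcl : IsClosedMap f) (hf : Continuous f) (hsurj : Surjective f)
    (hr : ∀ a b, r a b → f a = f b) (hfib : ∀ a b, f a = f b → Quot.mk r a = Quot.mk r b) :
    Quot r ≃ₜ Y :=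
  have hinj : Injective (Quot.lift f hr) := by
    rintro ⟨a⟩ ⟨b⟩ hab
    exact hfib a b hab
  have hsurj' : Surjective (Quot.lift f hr) := fun y =>
    (hsurj y).elim fun a ha => ⟨Quot.mk r a, ha⟩
  (Equiv.ofBijective _ ⟨hinj, hsurj'⟩).toHomeomorphOfContinuousClosed
    (continuous_quot_lift hr hf) (.of_comp_surjective Quot.mk_surjective continuous_quot_mk hcl)

theorem isInducing_comp_config {N : ℕ} {X Y : Type} [TopologicalSpace X] [TopologicalSpace Y]
    {f : X → Y} (hf : IsInducing f) : IsInducing fun w : Config N X => f ∘ w.1 :=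
  (IsInducing.piMap fun _ => hf).comp IsEmbedding.subtypeVal.isInducing

end GeneralTopology

section EdgeCompression

variable {V : Type*} [DecidableEq V] {p q : V}

variable (p q) in
def edgePoint (s : ℝ) : V → ℝ := s • Pi.single p 1 + (1 - s) • Pi.single q 1

variable (p q) in
/-- Moves the mass `(1 - t) * f p` from `p` to `q`: on the edge `[q, p]` this is the homothety of
ratio `t` centred at `q`, and it fixes every `f` with `f p = 0`. -/
def compressEdge (t : ℝ) (f : V → ℝ) : V → ℝ :=
  f - ((1 - t) * f p) • (Pi.single p 1 - Pi.single q 1)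

theorem edgePoint_apply_left (hpq : p ≠ q) (s : ℝ) : edgePoint p q s p = s := by
  simp [edgePoint, hpq]

theorem edgePoint_zero : edgePoint p q 0 = Pi.single q 1 := by
  simp [edgePoint]

theorem edgePoint_one : edgePoint p q 1 = Pi.single p 1 := by
  simp [edgePoint]

theorem compressEdge_apply_left (hpq : p ≠ q) (t : ℝ) (f : V → ℝ) :
    compressEdge p q t f p = t * f p := by
  simp [compressEdge, hpq]; ring

theorem compressEdge_of_apply_left_eq_zero {f : V → ℝ} (hf : f p = 0) (t : ℝ) :
    compressEdge p q t f = f := by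
  simp [compressEdge, hf]

theorem compressEdge_one (f : V → ℝ) : compressEdge p q 1 f = f := by
  simp [compressEdge]

theorem compressEdge_compressEdge (hpq : p ≠ q) (s t : ℝ) (f : V → ℝ) :
    compressEdge p q s (compressEdge p q t f) = compressEdge p q (s * t) f := by
  rw [compressEdge, compressEdge_apply_left hpq]
  ext v
  simp only [compressEdge, Pi.sub_apply, Pi.smul_apply, Pi.single_apply, smul_eq_mul]
  split_ifs <;> ring

theorem compressEdge_edgePoint (hpq : p ≠ q) (t s : ℝ) :
    compressEdge p q t (edgePoint p q s) = edgePoint p q (t * s) := by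
  rw [compressEdge, edgePoint_apply_left hpq]
  ext v
  simp only [edgePoint, Pi.add_apply, Pi.sub_apply, Pi.smul_apply, Pi.single_apply, smul_eq_mul]
  split_ifs <;> ring

theorem compressEdge_injective (hpq : p ≠ q) {t : ℝ} (ht : t ≠ 0) :
    Injective (compressEdge p q t) :=
  LeftInverse.injective (g := compressEdge p q t⁻¹) fun f => by
    rw [compressEdge_compressEdge hpq, inv_mul_cancel₀ ht, compressEdge_one]

theorem continuous_compressEdge : Continuous fun x : ℝ × (V → ℝ) => compressEdge p q x.1 x.2 := by
  unfold compressEdge; fun_prop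

theorem isClosed_setOf_eq_edgePoint : IsClosed {f : V → ℝ | f = edgePoint p q (f p)} :=
  isClosed_eq continuous_id (by unfold edgePoint; fun_prop)

end EdgeCompression

namespace SimpleGraph

variable {V : Type} [Fintype V] {G : SimpleGraph V} {p q : V}

theorem Realization.apply_le_one (x : G.Realization) (v : V) : x.1 v ≤ 1 :=
  (Finset.single_le_sum (fun u _ => x.2.1 u) (Finset.mem_univ v)).trans_eq x.2.2.1

theorem Realization.eq_or_eq_of_apply_ne_zero [DecidableRel G.Adj] (hp : G.degree p = 1)
    (hpq : G.Adj p q) (x : G.Realization) (hx : x.1 p ≠ 0) {v : V} (hv : x.1 v ≠ 0) :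
    v = p ∨ v = q := by
  obtain ⟨-, -, u, w, huw, hsupp⟩ := x.2
  have hnbr : ∀ {w}, G.Adj p w → w = q := fun hadj =>
    (degree_eq_one_iff_existsUnique_adj.mp hp).unique hadj hpq
  rcases huw with rfl | hadj
  · obtain rfl := (hsupp p hx).elim id id
    exact Or.inl ((hsupp v hv).elim id id)
  · rcases hsupp p hx with rfl | rfl
    · rw [← hnbr hadj]; exact hsupp v hv
    · rw [← hnbr hadj.symm]; exact (hsupp v hv).symm

variable [DecidableEq V]

theorem vertexPoint_val (v : V) : (G.vertexPoint v).1 = Pi.single v 1 := by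
  ext w; simp [vertexPoint, Pi.single_apply]

theorem edgePoint_mem_range (hpq : G.Adj p q) {s : ℝ} (h0 : 0 ≤ s) (h1 : s ≤ 1) :
    edgePoint p q s ∈ Set.range (Subtype.val : G.Realization → V → ℝ) := by
  refine ⟨⟨edgePoint p q s, fun v => ?_, ?_, p, q, Or.inr hpq, fun v hv => ?_⟩, rfl⟩
  · simp only [edgePoint, Pi.add_apply, Pi.smul_apply, Pi.single_apply, smul_eq_mul]
    split_ifs <;> linarith
  · simp [edgePoint, Finset.sum_add_distrib, ← Finset.mul_sum]
  · by_contra! h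
    simp [edgePoint, h.1, h.2] at hv

theorem compressEdge_vertexPoint (hpq : G.Adj p q) (t : ℝ) :
    compressEdge p q t (G.vertexPoint p).1 = edgePoint p q t := by
  rw [vertexPoint_val, ← edgePoint_one, compressEdge_edgePoint hpq.ne, mul_one]

variable [DecidableRel G.Adj]

theorem Realization.eq_edgePoint (hp : G.degree p = 1) (hpq : G.Adj p q) (x : G.Realization)
    (hx : x.1 p ≠ 0) : x.1 = edgePoint p q (x.1 p) := by
  have hsupp {v} := x.eq_or_eq_of_apply_ne_zero hp hpq hx (v := v)
  have hq : x.1 q = 1 - x.1 p := by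
    have hsum := x.2.2.1
    rw [Fintype.sum_eq_add p q hpq.ne fun v hv => by_contra fun h =>
      (hsupp h).elim hv.1 hv.2] at hsum
    linarith
  ext v
  rcases eq_or_ne v p with rfl | hvp
  · rw [edgePoint_apply_left hpq.ne]
  rcases eq_or_ne v q with rfl | hvq
  · simp [edgePoint, hvp, hq]
  · simp only [edgePoint, Pi.add_apply, Pi.smul_apply, Pi.single_apply, hvp, hvq, if_false,
      smul_eq_mul, mul_zero, add_zero]
    exact by_contra fun h => (hsupp h).elim hvp hvq

theorem compressEdge_mem_range (hp : G.degree p = 1) (hpq : G.Adj p q) (x : G.Realization)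
    {s : ℝ} (hs : 0 ≤ s) (hsx : s * x.1 p ≤ 1) :
    compressEdge p q s x.1 ∈ Set.range (Subtype.val : G.Realization → V → ℝ) := by
  by_cases hx : x.1 p = 0
  · exact ⟨x, (compressEdge_of_apply_left_eq_zero hx s).symm⟩
  · rw [x.eq_edgePoint hp hpq hx, compressEdge_edgePoint hpq.ne]
    exact edgePoint_mem_range hpq (mul_nonneg hs (x.2.1 p)) hsx

def Realization.compress (hp : G.degree p = 1) (hpq : G.Adj p q) (s : ℝ) (hs : 0 ≤ s)
    (x : G.Realization) (hsx : s * x.1 p ≤ 1) : G.Realization :=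
  ⟨compressEdge p q s x.1, by
    obtain ⟨y, hy⟩ := compressEdge_mem_range hp hpq x hs hsx
    exact hy ▸ y.2⟩

theorem Realization.compress_val (hp : G.degree p = 1) (hpq : G.Adj p q) {s : ℝ} (hs : 0 ≤ s)
    (x : G.Realization) (hsx : s * x.1 p ≤ 1) :
    (Realization.compress hp hpq s hs x hsx).1 = compressEdge p q s x.1 :=
  rfl

theorem Realization.eventually_apply_eq_zero (hp : G.degree p = 1) (hpq : G.Adj p q)
    (x₀ : G.Realization) (hx₀ : x₀.1 p = 0) (hq : x₀ ≠ G.vertexPoint q) :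
    ∀ᶠ x in 𝓝 x₀, x.1 p = 0 := by
  have hoff : x₀.1 ∉ {f : V → ℝ | f = edgePoint p q (f p)} := by
    intro h
    refine hq (Subtype.ext ?_)
    rw [h, hx₀, edgePoint_zero, vertexPoint_val]
  filter_upwards [continuous_subtype_val.continuousAt.preimage_mem_nhds
    (isClosed_setOf_eq_edgePoint.isOpen_compl.mem_nhds hoff)] with x hx
  exact by_contra fun h => hx (x.eq_edgePoint hp hpq h)

end SimpleGraph

section Gluing

open SimpleGraph

variable {V : Type} [Fintype V] {G : SimpleGraph V} {p q : V} {N : ℕ}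

theorem continuous_config_apply_val (m : Fin N) :
    Continuous fun w : Config N G.Realization => (w.1 m).1 :=
  (continuous_apply m).comp (isInducing_comp_config IsEmbedding.subtypeVal.isInducing).continuous

def subtreeIncl (y : Config N (SubtreeOff G p)) : Config N G.Realization :=
  ⟨fun m => (y.1 m).1, fun _ _ h => y.2 (Subtype.ext h)⟩

theorem isClosedEmbedding_subtreeIncl :
    IsClosedEmbedding (subtreeIncl : Config N (SubtreeOff G p) → Config N G.Realization) := by
  refine ⟨⟨?_, fun y y' h => Subtype.ext (funext fun m => Subtype.ext
    (congrFun (congrArg Subtype.val h) m))⟩, ?_⟩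
  · exact (isInducing_comp_config IsEmbedding.subtypeVal.isInducing).of_comp_iff.mp
      (isInducing_comp_config (IsEmbedding.subtypeVal.isInducing.comp
        IsEmbedding.subtypeVal.isInducing))
  · have hrange : Set.range (subtreeIncl : Config N (SubtreeOff G p) → _) =
        {w | ∀ m, (w.1 m).1 p = 0} := by
      ext w
      refine ⟨?_, fun hw =>
        ⟨⟨fun m => ⟨w.1 m, hw m⟩, fun _ _ h => w.2 (congrArg Subtype.val h)⟩, rfl⟩⟩
      rintro ⟨y, rfl⟩ m
      exact (y.1 m).2
    rw [hrange, Set.ofPred_forall]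
    exact isClosed_iInter fun m =>
      isClosed_eq ((continuous_apply p).comp (continuous_config_apply_val m)) continuous_const

variable [DecidableEq V]

theorem isInducing_gluePiece_coords (n : Fin N) :
    IsInducing fun z : GluePiece G p q N n => ((fun m => (z.1.1.1.1 m).1), (z.1.2 : ℝ)) :=
  ((isInducing_comp_config IsEmbedding.subtypeVal.isInducing).comp
    IsEmbedding.subtypeVal.isInducing |>.prodMap IsEmbedding.subtypeVal.isInducing).comp
    IsEmbedding.subtypeVal.isInducing

theorem GluePiece.apply_left_eq_zero {n : Fin N} (z : GluePiece G p q N n) (ht : z.1.2 = 0)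
    {m : Fin N} (hm : m ≠ n) : (z.1.1.1.1 m).1 p = 0 :=
  ((z.2.resolve_left (not_not.mpr ht)) m hm).1

variable (p q) in
/-- The image of the `n`-th glued piece: the `n`-th point lies on `e` and is the highest one. -/
def LeadsOnEdge (w : Config N G.Realization) (n : Fin N) : Prop :=
  (w.1 n).1 = edgePoint p q ((w.1 n).1 p) ∧ ∀ m, (w.1 m).1 p ≤ (w.1 n).1 p

theorem isClosed_setOf_leadsOnEdge (n : Fin N) :
    IsClosed {w : Config N G.Realization | LeadsOnEdge p q w n} := by
  have hheight m := (continuous_apply p).comp (continuous_config_apply_val (G := G) (N := N) m)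
  simp only [LeadsOnEdge, Set.ofPred_and, Set.ofPred_forall]
  exact (isClosed_setOf_eq_edgePoint.preimage (continuous_config_apply_val n)).inter
    (isClosed_iInter fun m => isClosed_le (hheight m) (hheight n))

theorem LeadsOnEdge.unique {w : Config N G.Realization} {n n' : Fin N}
    (h : LeadsOnEdge p q w n) (h' : LeadsOnEdge p q w n') : n = n' :=
  w.2 <| Subtype.ext <| by rw [h.1, h'.1, le_antisymm (h'.2 n) (h.2 n')]

theorem LeadsOnEdge.eq_vertexPoint {w : Config N G.Realization} {n : Fin N}
    (h : LeadsOnEdge p q w n) (h0 : (w.1 n).1 p = 0) : w.1 n = G.vertexPoint q :=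
  Subtype.ext <| by rw [h.1, h0, edgePoint_zero, vertexPoint_val]

variable [DecidableRel G.Adj]

theorem exists_leadsOnEdge (hp : G.degree p = 1) (hpq : G.Adj p q) (w : Config N G.Realization)
    (h : ∃ m, (w.1 m).1 p ≠ 0) : ∃ n, LeadsOnEdge p q w n := by
  obtain ⟨m₀, hm₀⟩ := h
  have : Nonempty (Fin N) := ⟨m₀⟩
  obtain ⟨n, hn⟩ := Finite.exists_max fun m => (w.1 m).1 p
  refine ⟨n, (w.1 n).eq_edgePoint hp hpq ?_, hn⟩
  exact ((lt_of_le_of_ne ((w.1 m₀).2.1 p) (Ne.symm hm₀)).trans_le (hn m₀)).ne'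

variable (hp : G.degree p = 1) (hpq : G.Adj p q)

def pieceFun {n : Fin N} (z : GluePiece G p q N n) (m : Fin N) : G.Realization :=
  Realization.compress hp hpq z.1.2 z.1.2.2.1 (z.1.1.1.1 m)
    (mul_le_one₀ z.1.2.2.2 ((z.1.1.1.1 m).2.1 p) ((z.1.1.1.1 m).apply_le_one p))

theorem pieceFun_of_eq_zero {n : Fin N} (z : GluePiece G p q N n) (ht : z.1.2 = 0) :
    pieceFun hp hpq z = update z.1.1.1.1 n (G.vertexPoint q) := by
  have ht' : (z.1.2 : ℝ) = 0 := congrArg Subtype.val ht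
  funext m
  apply Subtype.ext
  rcases eq_or_ne m n with rfl | hm
  · rw [pieceFun, Realization.compress_val, update_self, z.1.1.2, compressEdge_vertexPoint hpq,
      ht', edgePoint_zero, vertexPoint_val]
  · rw [pieceFun, Realization.compress_val, update_of_ne hm,
      compressEdge_of_apply_left_eq_zero (z.apply_left_eq_zero ht hm)]

theorem pieceFun_injective {n : Fin N} (z : GluePiece G p q N n) :
    Injective (pieceFun hp hpq z) := by
  by_cases ht : z.1.2 = 0
  · rw [pieceFun_of_eq_zero hp hpq z ht]
    refine z.1.1.1.2.update_of_forall_ne n fun m hm h => ?_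
    exact ((z.2.resolve_left (not_not.mpr ht)) m hm).2 h
  · exact fun a b hab => z.1.1.1.2 <| Subtype.ext <|
      compressEdge_injective hpq.ne (fun h => ht (Subtype.ext h)) (congrArg Subtype.val hab)

def pieceMap (n : Fin N) (z : GluePiece G p q N n) : Config N G.Realization :=
  ⟨pieceFun hp hpq z, pieceFun_injective hp hpq z⟩

theorem pieceMap_apply_val {n : Fin N} (z : GluePiece G p q N n) (m : Fin N) :
    ((pieceMap hp hpq n z).1 m).1 = compressEdge p q z.1.2 (z.1.1.1.1 m).1 :=
  rfl

theorem pieceMap_apply_self_val {n : Fin N} (z : GluePiece G p q N n) :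
    ((pieceMap hp hpq n z).1 n).1 = edgePoint p q z.1.2 := by
  rw [pieceMap_apply_val, z.1.1.2, compressEdge_vertexPoint hpq]

theorem continuous_pieceMap (n : Fin N) : Continuous (pieceMap hp hpq n) := by
  have hcoords := (isInducing_gluePiece_coords (G := G) (p := p) (q := q) n).continuous
  refine (isInducing_comp_config IsEmbedding.subtypeVal.isInducing).continuous_iff.mpr
    (continuous_pi fun m => ?_)
  exact continuous_compressEdge.comp (hcoords.snd.prodMk ((continuous_apply m).comp hcoords.fst))

theorem leadsOnEdge_pieceMap {n : Fin N} (z : GluePiece G p q N n) :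
    LeadsOnEdge p q (pieceMap hp hpq n z) n := by
  refine ⟨by rw [pieceMap_apply_self_val, edgePoint_apply_left hpq.ne], fun m => ?_⟩
  rw [pieceMap_apply_val, compressEdge_apply_left hpq.ne, pieceMap_apply_self_val,
    edgePoint_apply_left hpq.ne]
  exact mul_le_of_le_one_right z.1.2.2.1 ((z.1.1.1.1 m).apply_le_one p)

/-- The inverse of `pieceMap` on its image. When the height `t` of the `n`-th point is `0`, all
points have height `0`, and the junk value `0⁻¹ = 0` makes the compression the identity on them. -/
noncomputable def liftFun {n : Fin N} (w : {w : Config N G.Realization // LeadsOnEdge p q w n})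
    (m : Fin N) : G.Realization :=
  if m = n then G.vertexPoint p else
    Realization.compress hp hpq ((w.1.1 n).1 p)⁻¹ (inv_nonneg.mpr ((w.1.1 n).2.1 p)) (w.1.1 m)
      (inv_mul_le_one_of_le₀ (w.2.2 m) ((w.1.1 n).2.1 p))

theorem compressEdge_liftFun {n : Fin N} (w : {w : Config N G.Realization // LeadsOnEdge p q w n})
    (m : Fin N) : compressEdge p q ((w.1.1 n).1 p) (liftFun hp hpq w m).1 = (w.1.1 m).1 := by
  unfold liftFun
  split_ifs with hm
  · rw [compressEdge_vertexPoint hpq, hm, ← w.2.1]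
  · rw [Realization.compress_val, compressEdge_compressEdge hpq.ne]
    rcases eq_or_ne ((w.1.1 n).1 p) 0 with ht | ht
    · rw [ht, zero_mul, compressEdge_of_apply_left_eq_zero]
      exact le_antisymm ((w.2.2 m).trans_eq ht) ((w.1.1 m).2.1 p)
    · rw [mul_inv_cancel₀ ht, compressEdge_one]

theorem liftFun_injective {n : Fin N} (w : {w : Config N G.Realization // LeadsOnEdge p q w n}) :
    Injective (liftFun hp hpq w) := fun a b hab => w.1.2 <| Subtype.ext <| by
  rw [← compressEdge_liftFun hp hpq w a, hab, compressEdge_liftFun]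

theorem liftFun_of_eq_zero {n m : Fin N} (w : {w : Config N G.Realization // LeadsOnEdge p q w n})
    (ht : (w.1.1 n).1 p = 0) (hm : m ≠ n) :
    (liftFun hp hpq w m).1 p = 0 ∧ liftFun hp hpq w m ≠ G.vertexPoint q := by
  refine ⟨by simp [liftFun, hm, Realization.compress_val, compressEdge_apply_left hpq.ne, ht],
    fun hq => hm (w.1.2 ?_)⟩
  have h := compressEdge_liftFun hp hpq w m
  rw [hq, ht, compressEdge_of_apply_left_eq_zero (by simp [vertexPoint_val, hpq.ne])] at h
  rw [← Subtype.ext h, w.2.eq_vertexPoint ht]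

noncomputable def liftToPiece (n : Fin N)
    (w : {w : Config N G.Realization // LeadsOnEdge p q w n}) : GluePiece G p q N n :=
  ⟨(⟨⟨liftFun hp hpq w, liftFun_injective hp hpq w⟩, if_pos rfl⟩,
    ⟨(w.1.1 n).1 p, (w.1.1 n).2.1 p, (w.1.1 n).apply_le_one p⟩),
    or_iff_not_imp_left.mpr fun ht _ hm =>
      liftFun_of_eq_zero hp hpq w (congrArg Subtype.val (not_not.mp ht)) hm⟩

theorem pieceMap_liftToPiece {n : Fin N}
    (w : {w : Config N G.Realization // LeadsOnEdge p q w n}) :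
    pieceMap hp hpq n (liftToPiece hp hpq n w) = w.1 :=
  Subtype.ext <| funext fun m => Subtype.ext <| compressEdge_liftFun hp hpq w m

theorem liftToPiece_pieceMap {n : Fin N} (z : GluePiece G p q N n) :
    liftToPiece hp hpq n ⟨pieceMap hp hpq n z, leadsOnEdge_pieceMap hp hpq z⟩ = z := by
  have ht : ((pieceMap hp hpq n z).1 n).1 p = z.1.2 := by
    rw [pieceMap_apply_self_val, edgePoint_apply_left hpq.ne]
  refine Subtype.ext (Prod.ext (Subtype.ext (Subtype.ext (funext fun m => ?_))) (Subtype.ext ht))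
  show liftFun hp hpq _ m = z.1.1.1.1 m
  unfold liftFun
  split_ifs with hm
  · rw [hm, z.1.1.2]
  · refine Subtype.ext ?_
    rw [Realization.compress_val, ht, pieceMap_apply_val, compressEdge_compressEdge hpq.ne]
    rcases eq_or_ne z.1.2 0 with h0 | h0
    · exact compressEdge_of_apply_left_eq_zero (z.apply_left_eq_zero h0 hm) _
    · rw [inv_mul_cancel₀ (fun h => h0 (Subtype.ext h)), compressEdge_one]

theorem continuousAt_liftFun {n m : Fin N} (hm : m ≠ n)
    (w₀ : {w : Config N G.Realization // LeadsOnEdge p q w n}) :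
    ContinuousAt (fun w => (liftFun hp hpq w m).1) w₀ := by
  simp only [liftFun, if_neg hm, Realization.compress_val]
  rcases eq_or_ne ((w₀.1.1 n).1 p) 0 with ht | ht
  · -- near `w₀` the `m`-th point stays off the edge `e`, where the compression is the identity
    have h0 : (w₀.1.1 m).1 p = 0 := le_antisymm ((w₀.2.2 m).trans_eq ht) ((w₀.1.1 m).2.1 p)
    have hq : w₀.1.1 m ≠ G.vertexPoint q := by
      rw [← w₀.2.eq_vertexPoint ht]
      exact fun h => hm (w₀.1.2 h)
    have hoff : ∀ᶠ w in 𝓝 w₀, (w.1.1 m).1 p = 0 :=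
      ((continuous_apply m).comp (continuous_subtype_val.comp continuous_subtype_val)).continuousAt
        |>.eventually ((w₀.1.1 m).eventually_apply_eq_zero hp hpq h0 hq)
    exact ((continuous_config_apply_val m).comp continuous_subtype_val).continuousAt.congr
      (hoff.mono fun w hw => (compressEdge_of_apply_left_eq_zero hw _).symm)
  · exact continuous_compressEdge.continuousAt.comp
      ((((continuous_apply p).comp ((continuous_config_apply_val n).comp
        continuous_subtype_val)).continuousAt.inv₀ ht).prodMk
        ((continuous_config_apply_val m).comp continuous_subtype_val).continuousAt)

theorem continuous_liftToPiece (n : Fin N) : Continuous (liftToPiece hp hpq n) := by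
  refine (isInducing_gluePiece_coords n).continuous_iff.mpr (.prodMk (continuous_pi fun m => ?_)
    ((continuous_apply p).comp ((continuous_config_apply_val n).comp continuous_subtype_val)))
  rcases eq_or_ne m n with rfl | hm
  · simp only [liftToPiece, liftFun, if_pos]
    exact continuous_const
  · exact continuous_iff_continuousAt.mpr (continuousAt_liftFun hp hpq hm)

noncomputable def pieceHomeomorph (n : Fin N) :
    GluePiece G p q N n ≃ₜ {w : Config N G.Realization // LeadsOnEdge p q w n} where
  toFun z := ⟨pieceMap hp hpq n z, leadsOnEdge_pieceMap hp hpq z⟩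
  invFun := liftToPiece hp hpq n
  left_inv := liftToPiece_pieceMap hp hpq
  right_inv w := Subtype.ext (pieceMap_liftToPiece hp hpq w)
  continuous_toFun := (continuous_pieceMap hp hpq n).subtype_mk _
  continuous_invFun := continuous_liftToPiece hp hpq n

theorem isClosedEmbedding_pieceMap (n : Fin N) : IsClosedEmbedding (pieceMap hp hpq n) :=
  (IsClosedEmbedding.subtypeVal (isClosed_setOf_leadsOnEdge n)).comp
    (pieceHomeomorph hp hpq n).isClosedEmbedding

def gluingMap : Config N (SubtreeOff G p) ⊕ (Σ n : Fin N, GluePiece G p q N n) →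
    Config N G.Realization :=
  Sum.elim subtreeIncl fun s => pieceMap hp hpq s.1 s.2

theorem continuous_gluingMap : Continuous (gluingMap (N := N) hp hpq) :=
  isClosedEmbedding_subtreeIncl.continuous.sumElim
    (continuous_sigma fun n => continuous_pieceMap hp hpq n)

theorem isClosedMap_gluingMap : IsClosedMap (gluingMap (N := N) hp hpq) :=
  isClosedEmbedding_subtreeIncl.isClosedMap.sumElim
    (isClosedMap_sigma_of_finite fun n => (isClosedEmbedding_pieceMap hp hpq n).isClosedMap)

theorem gluingMap_surjective : Surjective (gluingMap (N := N) hp hpq) := by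
  intro w
  by_cases h : ∃ m, (w.1 m).1 p ≠ 0
  · obtain ⟨n, hn⟩ := exists_leadsOnEdge hp hpq w h
    exact ⟨.inr ⟨n, liftToPiece hp hpq n ⟨w, hn⟩⟩, pieceMap_liftToPiece hp hpq ⟨w, hn⟩⟩
  · push Not at h
    exact ⟨.inl ⟨fun m => ⟨w.1 m, h m⟩, fun _ _ hab => w.2 (congrArg Subtype.val hab)⟩, rfl⟩

theorem gluingMap_eq_of_glueRel
    (a b : Config N (SubtreeOff G p) ⊕ Σ n : Fin N, GluePiece G p q N n)
    (h : glueRel G p q N a b) : gluingMap hp hpq a = gluingMap hp hpq b := by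
  obtain ⟨n, z, y, ht, hyn, hym, rfl, rfl⟩ := h
  refine Subtype.ext (funext fun m => ?_)
  change (y.1 m).1 = pieceFun hp hpq z m
  rw [pieceFun_of_eq_zero hp hpq z ht]
  rcases eq_or_ne m n with rfl | hm
  · rw [update_self, hyn]
  · rw [update_of_ne hm, hym m hm]

theorem glueRel_of_subtreeIncl_eq_pieceMap {n : Fin N} {y : Config N (SubtreeOff G p)}
    {z : GluePiece G p q N n} (h : subtreeIncl y = pieceMap hp hpq n z) :
    glueRel G p q N (.inl y) (.inr ⟨n, z⟩) := by
  have hval m : (y.1 m).1 = pieceFun hp hpq z m := congrFun (congrArg Subtype.val h) m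
  have ht : z.1.2 = 0 := by
    have := congrArg (fun w : Config N G.Realization => (w.1 n).1 p) h
    simp only [subtreeIncl, (y.1 n).2, pieceMap_apply_self_val, edgePoint_apply_left hpq.ne] at this
    exact Subtype.ext this.symm
  rw [pieceFun_of_eq_zero hp hpq z ht] at hval
  exact ⟨n, z, y, ht, by rw [hval, update_self], fun m hm => by rw [hval, update_of_ne hm],
    rfl, rfl⟩

theorem quot_mk_eq_of_gluingMap_eq
    (a b : Config N (SubtreeOff G p) ⊕ Σ n : Fin N, GluePiece G p q N n)
    (h : gluingMap hp hpq a = gluingMap hp hpq b) :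
    Quot.mk (glueRel G p q N) a = Quot.mk (glueRel G p q N) b := by
  rcases a with y | ⟨n, z⟩ <;> rcases b with y' | ⟨n', z'⟩
  · rw [isClosedEmbedding_subtreeIncl.injective h]
  · exact Quot.sound (glueRel_of_subtreeIncl_eq_pieceMap hp hpq h)
  · exact (Quot.sound (glueRel_of_subtreeIncl_eq_pieceMap hp hpq h.symm)).symm
  · have h : pieceMap hp hpq n z = pieceMap hp hpq n' z' := h
    obtain rfl := (leadsOnEdge_pieceMap hp hpq z).unique (h ▸ leadsOnEdge_pieceMap hp hpq z')
    rw [(isClosedEmbedding_pieceMap hp hpq n).injective h]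

end Gluing

theorem tree_config_space_end_decomposition_general
    (V : Type) [Fintype V] [DecidableEq V] (G : SimpleGraph V) [DecidableRel G.Adj]
    (p q : V) (hp : G.degree p = 1) (hpq : G.Adj p q) (N : ℕ) :
    Nonempty (Config N G.Realization ≃ₜ Quot (glueRel G p q N)) :=
  ⟨(IsClosedMap.quotHomeomorph (isClosedMap_gluingMap hp hpq) (continuous_gluingMap hp hpq)
    (gluingMap_surjective hp hpq) (gluingMap_eq_of_glueRel hp hpq)
    (quot_mk_eq_of_gluingMap_eq hp hpq)).symm⟩

/-- For a finite tree `Υ` with boundary vertex `p` (valence 1) attached by the unique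
edge `e` to the vertex `q`, the configuration space `C^N(Υ)` is homeomorphic to the
space obtained from `C^N(Υ')`, `Υ' = closure(Υ - e̅)`, by gluing on, for each
`n = 1,…,N`, the piece `(Σ_n × (0,1]) ∪ (Σ'_n × {0})` along `Σ'_n × {0} ≅ Σ'_n ⊆ C^N(Υ')`. -/
theorem tree_config_space_end_decomposition
    (V : Type) [Fintype V] [DecidableEq V] (G : SimpleGraph V) [DecidableRel G.Adj]
    (hG : G.IsTree) (p q : V) (hp : G.degree p = 1) (hpq : G.Adj p q) (N : ℕ) :
    Nonempty (Config N G.Realization ≃ₜ Quot (glueRel G p q N)) :=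
  tree_config_space_end_decomposition_general V G p q hp hpq N
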